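/- arXiv:2008.08279 — 2 statements merged into one kernel-verified Lean document; each statement's English description precedes it below -/
import Mathlib

section
/- Let q be an odd prime power with q ≡ 1 (mod 4) and let d ≥ 3 be odd. Then there exist a set 𝒫 of points in 𝔽_q^d and a set Π of affine hyperplanes in 𝔽_q^d with |𝒫| = |Π| = q^{(d−1)/2} such that every point of 𝒫 lies on every hyperplane of Π, i.e., I(𝒫,Π) = |𝒫||Π| = q^{d−1}. -/
open Finset

/-- The affine hyperplane `{x : a · x = b}` in `𝔽_q^d`, as a finset. -/
def hyperplane (d : ℕ) (F : Type) [Field F] [Fintype F] [DecidableEq F]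
    (a : Fin d → F) (b : F) : Finset (Fin d → F) :=
  Finset.univ.filter fun x => ∑ i, a i * x i = b

open Matrix

/-!
Write `d = 2k + 1` and pick `i ∈ 𝔽_q` with `i² = -1`, which exists since `q ≡ 1 (mod 4)`.
The vectors `(t, i t)`, `t ∈ 𝔽_q^k`, form a totally isotropic subspace of `𝔽_q^{2k}`:
`(s, i s) · (t, i t) = (1 + i²) s · t = 0`. Hence every point `(0, t, i t)` lies on every
hyperplane `(1, s, i s) · x = 0`, and both families are parametrised injectively by `𝔽_q^k`.
-/

lemma card_filter_mem_product_of_forall_mem {α : Type*} [DecidableEq α] {P : Finset α}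
    {Pi : Finset (Finset α)} (h : ∀ p ∈ P, ∀ π ∈ Pi, p ∈ π) :
    ((P ×ˢ Pi).filter fun pair => pair.1 ∈ pair.2).card = P.card * Pi.card := by
  rw [filter_true_of_mem fun pair hpair => h _ (mem_product.1 hpair).1 _ (mem_product.1 hpair).2,
    card_product]

lemma append_dotProduct_append {α : Type*} [AddCommMonoid α] [Mul α] {m n : ℕ}
    (u u' : Fin m → α) (v v' : Fin n → α) :
    Fin.append u v ⬝ᵥ Fin.append u' v' = u ⬝ᵥ u' + v ⬝ᵥ v' := by
  simp [dotProduct, Fin.sum_univ_add]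

lemma mem_hyperplane {d : ℕ} {F : Type} [Field F] [Fintype F] [DecidableEq F]
    {a : Fin d → F} {b : F} {x : Fin d → F} : x ∈ hyperplane d F a b ↔ a ⬝ᵥ x = b := by
  simp [hyperplane, dotProduct]

lemma hyperplane_cons_one_zero_injective {d : ℕ} {F : Type} [Field F] [Fintype F]
    [DecidableEq F] :
    Function.Injective fun u : Fin d → F => hyperplane (d + 1) F (vecCons 1 u) 0 := by
  intro u v (huv : hyperplane _ _ _ _ = hyperplane _ _ _ _)
  funext j
  have hx : vecCons (-u j) (Pi.single j 1) ∈ hyperplane (d + 1) F (vecCons 1 u) 0 := by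
    simp [mem_hyperplane, dotProduct_single]
  rw [huv, mem_hyperplane, cons_dotProduct_cons, dotProduct_single] at hx
  linear_combination -hx

section Isotropic

variable {R : Type*} [CommRing R] {k : ℕ}

def isotropicEmbedding (i : R) (t : Fin k → R) : Fin (k + k) → R := Fin.append t (i • t)

lemma isotropicEmbedding_injective (i : R) : Function.Injective (isotropicEmbedding (k := k) i) :=
  fun s t hst => funext fun j => by
    simpa [isotropicEmbedding] using congrFun hst (Fin.castAdd k j)

lemma isotropicEmbedding_dotProduct {i : R} (hi : i * i = -1) (s t : Fin k → R) :
    isotropicEmbedding i s ⬝ᵥ isotropicEmbedding i t = 0 := by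
  rw [isotropicEmbedding, isotropicEmbedding, append_dotProduct_append, smul_dotProduct,
    dotProduct_smul, smul_eq_mul, smul_eq_mul, ← mul_assoc, hi]
  ring

end Isotropic

theorem incidence_sharpness_one_mod_four_general (d : ℕ) (hdodd : d % 2 = 1)
    (F : Type) [Field F] [Fintype F] [DecidableEq F]
    (hq1 : Fintype.card F % 4 = 1) :
    ∃ (P : Finset (Fin d → F)) (Pi : Finset (Finset (Fin d → F))),
      (∀ h ∈ Pi, ∃ (a : Fin d → F) (b : F), a ≠ 0 ∧ h = hyperplane d F a b) ∧
      P.card = Fintype.card F ^ ((d - 1) / 2) ∧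
      Pi.card = Fintype.card F ^ ((d - 1) / 2) ∧
      (∀ p ∈ P, ∀ h ∈ Pi, p ∈ h) ∧
      ((P ×ˢ Pi).filter fun pair => pair.1 ∈ pair.2).card = Fintype.card F ^ (d - 1) := by
  obtain ⟨i, hi⟩ : IsSquare (-1 : F) := FiniteField.isSquare_neg_one_iff.2 (by omega)
  obtain ⟨k, rfl⟩ : ∃ k, d = k + k + 1 := ⟨d / 2, by omega⟩
  set point : (Fin k → F) → Fin (k + k + 1) → F := fun t => vecCons 0 (isotropicEmbedding i t)
  set plane : (Fin k → F) → Finset (Fin (k + k + 1) → F) :=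
    fun s => hyperplane (k + k + 1) F (vecCons 1 (isotropicEmbedding i s)) 0
  have hpoint : Function.Injective point :=
    (Fin.cons_right_injective _).comp (isotropicEmbedding_injective i)
  have hplane : Function.Injective plane :=
    hyperplane_cons_one_zero_injective.comp (isotropicEmbedding_injective i)
  have hinc : ∀ p ∈ univ.image point, ∀ h ∈ univ.image plane, p ∈ h := by
    simp only [mem_image, mem_univ, true_and, forall_exists_index, forall_apply_eq_imp_iff]
    intro t s
    rw [mem_hyperplane, cons_dotProduct_cons, isotropicEmbedding_dotProduct hi.symm]
    ring
  have hcard : Fintype.card (Fin k → F) = Fintype.card F ^ ((k + k + 1 - 1) / 2) := by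
    rw [Fintype.card_fun, Fintype.card_fin]
    congr 1
    omega
  refine ⟨univ.image point, univ.image plane, ?_, ?_, ?_, hinc, ?_⟩
  · simp only [mem_image, mem_univ, true_and, forall_exists_index, forall_apply_eq_imp_iff]
    exact fun s => ⟨_, 0, fun h => one_ne_zero (congrFun h 0), rfl⟩
  · rw [card_image_of_injective _ hpoint, card_univ, hcard]
  · rw [card_image_of_injective _ hplane, card_univ, hcard]
  · rw [card_filter_mem_product_of_forall_mem hinc, card_image_of_injective _ hpoint,
      card_image_of_injective _ hplane, card_univ, hcard, ← pow_add]
    congr 1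
    omega

/-- Example 2.1: sharpness of the incidence bound. If `q ≡ 1 (mod 4)` and `d ≥ 3` is odd,
there are a point set `𝒫` and a set `Π` of affine hyperplanes with
`|𝒫| = |Π| = q^{(d-1)/2}` such that every point of `𝒫` lies on every hyperplane of `Π`,
so `I(𝒫, Π) = |𝒫||Π| = q^{d-1}`. -/
theorem incidence_sharpness_one_mod_four (d : ℕ) (hdodd : d % 2 = 1) (hd3 : 3 ≤ d)
    (F : Type) [Field F] [Fintype F] [DecidableEq F]
    (hq : Odd (Fintype.card F)) (hq1 : Fintype.card F % 4 = 1) :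
    ∃ (P : Finset (Fin d → F)) (Pi : Finset (Finset (Fin d → F))),
      (∀ h ∈ Pi, ∃ (a : Fin d → F) (b : F), a ≠ 0 ∧ h = hyperplane d F a b) ∧
      P.card = Fintype.card F ^ ((d - 1) / 2) ∧
      Pi.card = Fintype.card F ^ ((d - 1) / 2) ∧
      (∀ p ∈ P, ∀ h ∈ Pi, p ∈ h) ∧
      ((P ×ˢ Pi).filter fun pair => pair.1 ∈ pair.2).card = Fintype.card F ^ (d - 1) :=
  incidence_sharpness_one_mod_four_general d hdodd F hq1
end

section
/- Let n ≡ 0 (mod 4) and let q be an odd prime power with q ≡ 3 (mod 4). Let C_n = {m ∈ 𝔽_q^n : m_n² = m₁²+⋯+m_{n−1}²} be the cone in 𝔽_q^n. There exists a constant C > 0 (depending only on n) such that for every G ⊆ 𝔽_q^n, ‖Ĝ‖_{L²(C_n, dσ)} ≤ C ( |G|^{1/2} + |G| q^{−n/4} ), i.e., ((1/|C_n|) Σ_{x∈C_n} |Ĝ(x)|²)^{1/2} ≤ C ( |G|^{1/2} + |G|/q^{n/4} ), where Ĝ(x) = Σ_{m∈G} χ(−x·m). -/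
open Finset AddChar ComplexConjugate

/-!
Expanding the square gives `∑_{x ∈ C} |Ĝ(x)|² = ∑_{m, m' ∈ G} Ĉ(m' - m)` with
`Ĉ(y) = ∑_{x ∈ C} χ(x·y)`. Detecting `C = {Q = 0}` through `∑_t χ(t Q(x))` and evaluating the
resulting diagonal Gauss sums gives `q Ĉ(y) = q^n δ(y) - q^{n/2} (q [Q*(y) = 0] - 1)`: the factor
`η(-1) g^n = η(-1) (η(-1) q)^{n/2}` equals `-q^{n/2}` because `n/2` is even and `η(-1) = -1` for
`q ≡ 3 (mod 4)`. This sign gives `q Ĉ(y) ≤ q^n δ(y) + q^{n/2}`, hence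
`q ∑ |Ĝ|² ≤ q^n |G| + q^{n/2} |G|²`, while `q |C| = q^n - q^{n/2} (q - 1) ≥ (2/3) q^n`.
-/

/-- The cone `C_n = {m ∈ 𝔽_q^n : m_n² = m₁² + ⋯ + m_{n-1}²}`. -/
def cone (n : ℕ) (hn : 0 < n) (F : Type) [Field F] [Fintype F] [DecidableEq F] :
    Finset (Fin n → F) :=
  Finset.univ.filter fun m =>
    m ⟨n - 1, by omega⟩ ^ 2 =
      ∑ i ∈ Finset.univ.filter (fun i : Fin n => (i : ℕ) < n - 1), m i ^ 2

lemma addChar_map_sum {A M ι : Type*} [AddCommMonoid A] [CommMonoid M] (ψ : AddChar A M)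
    (s : Finset ι) (f : ι → A) : ψ (∑ i ∈ s, f i) = ∏ i ∈ s, ψ (f i) :=
  map_prod ψ.toMonoidHom (fun i => Multiplicative.ofAdd (f i)) s

section CharacterSums

variable {F : Type*} [Field F] [Fintype F]

lemma ringChar_ne_two_of_card_mod_four (hq : Fintype.card F % 4 = 3) : ringChar F ≠ 2 := by
  rw [Ne, FiniteField.even_card_iff_char_two]
  omega

variable [DecidableEq F]

noncomputable def complexQuadraticChar (F : Type*) [Field F] [Fintype F] [DecidableEq F] :
    MulChar F ℂ :=
  (quadraticChar F).ringHomComp (Int.castRingHom ℂ)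

local notation "η" => complexQuadraticChar _

lemma complexQuadraticChar_isQuadratic : (complexQuadraticChar F).IsQuadratic :=
  (quadraticChar_isQuadratic F).comp _

lemma complexQuadraticChar_ne_one (hF : ringChar F ≠ 2) : complexQuadraticChar F ≠ 1 :=
  (MulChar.ringHomComp_ne_one_iff (RingHom.injective_int _)).mpr (quadraticChar_ne_one hF)

lemma complexQuadraticChar_mul_self {a : F} (ha : a ≠ 0) : η a * η a = 1 := by
  have h : quadraticChar F a ^ 2 = 1 := quadraticChar_sq_one ha
  simp only [complexQuadraticChar, MulChar.ringHomComp_apply, eq_intCast, ← sq]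
  exact_mod_cast h

lemma complexQuadraticChar_neg_one (hq : Fintype.card F % 4 = 3) : η (-1 : F) = -1 := by
  have h : quadraticChar F (-1) = -1 :=
    quadraticChar_neg_one_iff_not_isSquare.mpr fun h => FiniteField.isSquare_neg_one_iff.mp h hq
  simp [complexQuadraticChar, h]

lemma gaussSum_complexQuadraticChar_sq (hq : Fintype.card F % 4 = 3) {χ : AddChar F ℂ}
    (hχ : χ ≠ 1) : gaussSum η χ ^ 2 = -(Fintype.card F : ℂ) := by
  rw [gaussSum_sq (complexQuadraticChar_ne_one (ringChar_ne_two_of_card_mod_four hq))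
    complexQuadraticChar_isQuadratic (IsPrimitive.of_ne_one hχ), complexQuadraticChar_neg_one hq,
    neg_one_mul]

variable {χ : AddChar F ℂ}

lemma complexQuadraticChar_card_sqrts (hF : ringChar F ≠ 2) (y : F) :
    (#{s : F | s ^ 2 = y} : ℂ) = η y + 1 := by
  have h := quadraticChar_card_sqrts hF y
  rw [Set.toFinset_ofPred] at h
  simp only [complexQuadraticChar, MulChar.ringHomComp_apply, eq_intCast]
  exact_mod_cast h

lemma sum_addChar_mul_sq (hF : ringChar F ≠ 2) (hχ : χ ≠ 1) {a : F} (ha : a ≠ 0) :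
    ∑ s, χ (a * s ^ 2) = η a * gaussSum η χ := by
  calc ∑ s, χ (a * s ^ 2)
      = ∑ y, ∑ s with s ^ 2 = y, χ (a * s ^ 2) := (sum_fiberwise _ _ _).symm
    _ = ∑ y, (η y + 1) * χ (a * y) := by
      refine sum_congr rfl fun y _ => ?_
      rw [sum_congr rfl fun s hs => by rw [(mem_filter.mp hs).2], sum_const, nsmul_eq_mul,
        complexQuadraticChar_card_sqrts hF]
    _ = gaussSum η (χ.mulShift a) + ∑ y, χ (y * a) := by
      simp only [add_mul, one_mul, sum_add_distrib, gaussSum, mulShift_apply, mul_comm a]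
    _ = η a * gaussSum η χ := by
      rw [sum_mulShift a (IsPrimitive.of_ne_one hχ), if_neg ha, Nat.cast_zero, add_zero]
      simpa [complexQuadraticChar_isQuadratic.inv] using gaussSum_mulShift_eq η χ (Units.mk0 a ha)

lemma sum_addChar_quadratic (hF : ringChar F ≠ 2) (hχ : χ ≠ 1) {a : F} (ha : a ≠ 0) (b : F) :
    ∑ s, χ (a * s ^ 2 + b * s) = η a * gaussSum η χ * χ (-(b ^ 2 / (4 * a))) := by
  have h2 : (2 : F) ≠ 0 := Ring.two_ne_zero hF
  have h4 : (4 : F) ≠ 0 := by rw [show (4 : F) = 2 * 2 by norm_num]; exact mul_ne_zero h2 h2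
  have hsquare : ∀ s : F, a * s ^ 2 + b * s = a * (s + b / (2 * a)) ^ 2 + -(b ^ 2 / (4 * a)) := by
    intro s; field_simp; ring
  simp_rw [hsquare, map_add_eq_mul, ← sum_mul, ← sum_addChar_mul_sq hF hχ ha]
  congr 1
  exact Fintype.sum_equiv (Equiv.addRight (b / (2 * a))) _ _ fun s => rfl

lemma sum_addChar_diagonal {ι : Type*} [Fintype ι] [DecidableEq ι] (hF : ringChar F ≠ 2)
    (hχ : χ ≠ 1) {c : ι → F} (hc : ∀ i, c i ≠ 0) (y : ι → F) :
    ∑ x : ι → F, χ (∑ i, (c i * x i ^ 2 + y i * x i))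
      = (∏ i, η (c i)) * gaussSum η χ ^ Fintype.card ι * χ (-∑ i, y i ^ 2 / (4 * c i)) := by
  simp_rw [addChar_map_sum]
  rw [← Fintype.prod_sum fun i s => χ (c i * s ^ 2 + y i * s)]
  simp_rw [sum_addChar_quadratic hF hχ (hc _)]
  rw [prod_mul_distrib, prod_mul_distrib, prod_const, card_univ, ← sum_neg_distrib, addChar_map_sum]

lemma sum_addChar_dotProduct {ι : Type*} [Fintype ι] [DecidableEq ι] (hχ : χ ≠ 1) (y : ι → F) :
    ∑ x : ι → F, χ (x ⬝ᵥ y) = if y = 0 then (Fintype.card F : ℂ) ^ Fintype.card ι else 0 := by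
  simp_rw [dotProduct, addChar_map_sum]
  rw [← Fintype.prod_sum fun i s => χ (s * y i)]
  simp only [sum_mulShift _ (IsPrimitive.of_ne_one hχ), Nat.cast_ite, Nat.cast_zero,
    prod_ite_zero, prod_const, card_univ, mem_univ, forall_const, funext_iff, Pi.zero_apply]

lemma sum_addChar_div (hχ : χ ≠ 1) (d : F) :
    ∑ t ∈ univ.erase 0, χ (d / t) = (if d = 0 then (Fintype.card F : ℂ) else 0) - 1 := by
  have hinv : ∑ t, χ (d / t) = ∑ u, χ (u * d) :=
    Fintype.sum_equiv (Equiv.inv F) _ _ fun t => by simp [div_eq_mul_inv, mul_comm]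
  rw [← add_sum_erase _ _ (mem_univ 0), div_zero, map_zero_eq_one,
    sum_mulShift d (IsPrimitive.of_ne_one hχ)] at hinv
  push_cast at hinv
  linear_combination hinv

lemma card_mul_sum_filter_eq_zero {α : Type*} [Fintype α] (hχ : χ ≠ 1) (Q : α → F)
    (f : α → ℂ) :
    (Fintype.card F : ℂ) * ∑ x with Q x = 0, f x = ∑ t, ∑ x, χ (t * Q x) * f x := by
  rw [sum_comm, sum_filter, mul_sum]
  refine sum_congr rfl fun x _ => ?_
  rw [← sum_mul, sum_mulShift _ (IsPrimitive.of_ne_one hχ)]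
  split_ifs <;> simp

def diagonalQuadric {ι : Type*} [Fintype ι] [DecidableEq ι] (c : ι → F) : Finset (ι → F) :=
  {x | ∑ i, c i * x i ^ 2 = 0}

lemma sum_addChar_diagonalQuadric_of_ne_zero {ι : Type*} [Fintype ι] [DecidableEq ι]
    (hF : ringChar F ≠ 2) (hχ : χ ≠ 1) (hι : Even (Fintype.card ι)) {c : ι → F}
    (hc : ∀ i, c i ≠ 0) (y : ι → F) {t : F} (ht : t ≠ 0) :
    ∑ x : ι → F, χ (t * ∑ i, c i * x i ^ 2 + x ⬝ᵥ y)
      = (∏ i, η (c i)) * gaussSum η χ ^ Fintype.card ι * χ (-(∑ i, y i ^ 2 / (4 * c i)) / t) := by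
  have hform : ∀ x : ι → F, t * ∑ i, c i * x i ^ 2 + x ⬝ᵥ y
      = ∑ i, (t * c i * x i ^ 2 + y i * x i) := fun x => by
    simp only [dotProduct, mul_sum, ← sum_add_distrib, mul_assoc, mul_comm (x _) (y _)]
  have hη : ∏ i, η (t * c i) = ∏ i, η (c i) := by
    obtain ⟨k, hk⟩ := hι
    have hpow : η t ^ Fintype.card ι = 1 := by
      rw [hk, ← two_mul, pow_mul, sq, complexQuadraticChar_mul_self ht, one_pow]
    simp only [map_mul, prod_mul_distrib, prod_const, card_univ, hpow, one_mul]
  simp_rw [hform, sum_addChar_diagonal hF hχ (fun i => mul_ne_zero ht (hc i)) y, hη, neg_div,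
    sum_div, div_div, mul_left_comm (4 : F) t, mul_comm t]

lemma card_mul_sum_diagonalQuadric {ι : Type*} [Fintype ι] [DecidableEq ι]
    (hF : ringChar F ≠ 2) (hχ : χ ≠ 1) (hι : Even (Fintype.card ι)) {c : ι → F}
    (hc : ∀ i, c i ≠ 0) (y : ι → F) :
    (Fintype.card F : ℂ) * ∑ x ∈ diagonalQuadric c, χ (x ⬝ᵥ y)
      = (if y = 0 then (Fintype.card F : ℂ) ^ Fintype.card ι else 0)
        + (∏ i, η (c i)) * gaussSum η χ ^ Fintype.card ι
          * ((if ∑ i, y i ^ 2 / (4 * c i) = 0 then (Fintype.card F : ℂ) else 0) - 1) := by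
  rw [diagonalQuadric, card_mul_sum_filter_eq_zero hχ, ← add_sum_erase _ _ (mem_univ 0)]
  simp_rw [← map_add_eq_mul]
  rw [sum_congr rfl fun t ht =>
    sum_addChar_diagonalQuadric_of_ne_zero hF hχ hι hc y (ne_of_mem_erase ht)]
  simp only [zero_mul, zero_add, sum_addChar_dotProduct hχ, ← mul_sum, sum_addChar_div hχ,
    neg_eq_zero]

end CharacterSums

lemma sum_norm_sq_sum_addChar {R ι : Type*} [CommRing R] [Finite R] [Fintype ι]
    (ψ : AddChar R ℂ) (C G : Finset (ι → R)) :
    ((∑ x ∈ C, ‖∑ m ∈ G, ψ (-(x ⬝ᵥ m))‖ ^ 2 : ℝ) : ℂ)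
      = ∑ m ∈ G, ∑ m' ∈ G, ∑ x ∈ C, ψ (x ⬝ᵥ (m' - m)) := by
  calc ((∑ x ∈ C, ‖∑ m ∈ G, ψ (-(x ⬝ᵥ m))‖ ^ 2 : ℝ) : ℂ)
      = ∑ x ∈ C, (∑ m ∈ G, ψ (-(x ⬝ᵥ m))) * conj (∑ m' ∈ G, ψ (-(x ⬝ᵥ m'))) := by
        push_cast
        simp only [Complex.mul_conj']
    _ = ∑ x ∈ C, ∑ m ∈ G, ∑ m' ∈ G, ψ (x ⬝ᵥ (m' - m)) := by
        simp only [map_sum, sum_mul_sum, ← map_neg_eq_conj, neg_neg, ← map_add_eq_mul,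
          dotProduct_sub, neg_add_eq_sub]
    _ = ∑ m ∈ G, ∑ m' ∈ G, ∑ x ∈ C, ψ (x ⬝ᵥ (m' - m)) := by
        rw [sum_comm]
        exact sum_congr rfl fun m _ => sum_comm

lemma sum_sum_sub_le {α : Type*} [AddGroup α] [DecidableEq α] (G : Finset α) {s : α → ℝ}
    {a b : ℝ} (hs : ∀ y, s y ≤ (if y = 0 then a else 0) + b) :
    ∑ m ∈ G, ∑ m' ∈ G, s (m' - m) ≤ a * #G + b * #G ^ 2 := by
  calc ∑ m ∈ G, ∑ m' ∈ G, s (m' - m)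
      ≤ ∑ m ∈ G, ∑ m' ∈ G, ((if m' = m then a else 0) + b) :=
        sum_le_sum fun m _ => sum_le_sum fun m' _ => by simpa [sub_eq_zero] using hs (m' - m)
    _ = a * #G + b * #G ^ 2 := by
        simp only [sum_add_distrib, sum_ite_eq', sum_const, nsmul_eq_mul]
        rw [sum_ite_of_true fun m hm => hm, sum_const, nsmul_eq_mul]
        ring

section Cone

variable {F : Type} [Field F] {n : ℕ}

def coneCoeff (n : ℕ) (F : Type*) [Field F] : Fin n → F :=
  fun i => if (i : ℕ) < n - 1 then 1 else -1

lemma coneCoeff_ne_zero (i : Fin n) : coneCoeff n F i ≠ 0 := by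
  unfold coneCoeff; split_ifs <;> simp

variable [Fintype F] [DecidableEq F] {χ : AddChar F ℂ}

local notation "η" => complexQuadraticChar _

lemma filter_not_lt_sub_one_eq_singleton (hn : 0 < n) :
    ({i | ¬(i : ℕ) < n - 1} : Finset (Fin n)) = {⟨n - 1, by omega⟩} := by
  ext i
  simp only [mem_filter, mem_univ, true_and, mem_singleton, Fin.ext_iff]
  omega

lemma cone_eq_diagonalQuadric (hn : 0 < n) : cone n hn F = diagonalQuadric (coneCoeff n F) := by
  ext x
  simp only [cone, diagonalQuadric, coneCoeff, mem_filter, mem_univ, true_and, ite_mul, one_mul,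
    neg_one_mul, sum_ite, filter_not_lt_sub_one_eq_singleton hn, sum_singleton, ← sub_eq_add_neg]
  rw [sub_eq_zero, eq_comm]

lemma prod_complexQuadraticChar_coneCoeff (hn : 0 < n) :
    ∏ i, η (coneCoeff n F i) = η (-1 : F) := by
  simp only [coneCoeff, apply_ite η, map_one, prod_ite, prod_const_one, one_mul,
    filter_not_lt_sub_one_eq_singleton hn, prod_singleton]

lemma prod_coneCoeff_mul_gaussSum_pow (hn : 0 < n) (hn4 : n % 4 = 0) (hq : Fintype.card F % 4 = 3)
    (hχ : χ ≠ 1) :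
    (∏ i, η (coneCoeff n F i)) * gaussSum η χ ^ n = -(Fintype.card F : ℂ) ^ (n / 2) := by
  obtain ⟨k, rfl⟩ : ∃ k, n = 4 * k := ⟨n / 4, by omega⟩
  rw [prod_complexQuadraticChar_coneCoeff hn, complexQuadraticChar_neg_one hq,
    show 4 * k = 2 * (2 * k) by ring, pow_mul, gaussSum_complexQuadraticChar_sq hq hχ,
    Nat.mul_div_cancel_left _ two_pos, (even_two_mul k).neg_pow, neg_one_mul]

noncomputable def coneTransform (n : ℕ) (F : Type*) [Field F] [Fintype F] [DecidableEq F]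
    (y : Fin n → F) : ℝ :=
  (if y = 0 then (Fintype.card F : ℝ) ^ n else 0)
    - (Fintype.card F : ℝ) ^ (n / 2)
      * ((if ∑ i, y i ^ 2 / (4 * coneCoeff n F i) = 0 then (Fintype.card F : ℝ) else 0) - 1)

lemma card_mul_sum_cone_addChar (hn : 0 < n) (hn4 : n % 4 = 0) (hq : Fintype.card F % 4 = 3)
    (hχ : χ ≠ 1) (y : Fin n → F) :
    (Fintype.card F : ℂ) * ∑ x ∈ cone n hn F, χ (x ⬝ᵥ y) = coneTransform n F y := by
  have hn2 : Even (Fintype.card (Fin n)) := by rw [Fintype.card_fin]; exact ⟨n / 2, by omega⟩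
  rw [cone_eq_diagonalQuadric hn, card_mul_sum_diagonalQuadric
    (ringChar_ne_two_of_card_mod_four hq) hχ hn2 coneCoeff_ne_zero y, Fintype.card_fin,
    prod_coneCoeff_mul_gaussSum_pow hn hn4 hq hχ, coneTransform]
  push_cast [apply_ite]
  ring

lemma coneTransform_le (y : Fin n → F) :
    coneTransform n F y ≤ (if y = 0 then (Fintype.card F : ℝ) ^ n else 0)
      + (Fintype.card F : ℝ) ^ (n / 2) := by
  have hpos : (0 : ℝ) ≤ (Fintype.card F : ℝ) ^ (n / 2) * Fintype.card F := by positivity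
  unfold coneTransform
  split_ifs <;> linarith

lemma coneTransform_zero :
    coneTransform n F 0 = (Fintype.card F : ℝ) ^ n
      - (Fintype.card F : ℝ) ^ (n / 2) * ((Fintype.card F : ℝ) - 1) := by
  simp [coneTransform]

lemma card_mul_card_cone (hn : 0 < n) (hn4 : n % 4 = 0) (hq : Fintype.card F % 4 = 3)
    (hχ : χ ≠ 1) :
    (Fintype.card F : ℝ) * #(cone n hn F) = (Fintype.card F : ℝ) ^ n
      - (Fintype.card F : ℝ) ^ (n / 2) * ((Fintype.card F : ℝ) - 1) := by
  have h := card_mul_sum_cone_addChar hn hn4 hq hχ 0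
  simp only [dotProduct_zero, map_zero_eq_one, sum_const, nsmul_eq_mul, mul_one,
    coneTransform_zero] at h
  exact_mod_cast h

lemma card_mul_sum_cone_norm_sq_le (hn : 0 < n) (hn4 : n % 4 = 0)
    (hq : Fintype.card F % 4 = 3) (hχ : χ ≠ 1) (G : Finset (Fin n → F)) :
    (Fintype.card F : ℝ) * ∑ x ∈ cone n hn F, ‖∑ m ∈ G, χ (-(x ⬝ᵥ m))‖ ^ 2
      ≤ (Fintype.card F : ℝ) ^ n * #G + (Fintype.card F : ℝ) ^ (n / 2) * #G ^ 2 := by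
  have h : (Fintype.card F : ℝ) * ∑ x ∈ cone n hn F, ‖∑ m ∈ G, χ (-(x ⬝ᵥ m))‖ ^ 2
      = ∑ m ∈ G, ∑ m' ∈ G, coneTransform n F (m' - m) := by
    apply Complex.ofReal_injective
    rw [Complex.ofReal_mul, Complex.ofReal_natCast, sum_norm_sq_sum_addChar, Complex.ofReal_sum,
      mul_sum]
    refine sum_congr rfl fun m _ => ?_
    rw [Complex.ofReal_sum, mul_sum]
    exact sum_congr rfl fun m' _ => card_mul_sum_cone_addChar hn hn4 hq hχ (m' - m)
  rw [h]
  exact sum_sum_sub_le G coneTransform_le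

end Cone

lemma two_thirds_mul_pow_le {q : ℝ} (hq : 3 ≤ q) {n : ℕ} (hn : 4 ≤ n) :
    2 / 3 * q ^ n ≤ q ^ n - q ^ (n / 2) * (q - 1) := by
  have h1 : q ^ (n / 2) * (q - 1) ≤ q ^ (n - 1) :=
    calc q ^ (n / 2) * (q - 1) ≤ q ^ (n / 2 + 1) := by rw [pow_succ]; gcongr; linarith
      _ ≤ q ^ (n - 1) := pow_le_pow_right₀ (by linarith) (by omega)
  have h2 : q ^ n = q * q ^ (n - 1) := by rw [← pow_succ', Nat.sub_add_cancel (by omega)]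
  have h3 : 0 ≤ q ^ (n - 1) := by positivity
  nlinarith

lemma rpow_half_le_of_mul_le {k c E g h : ℝ} (hk : 0 < k) (hh : 0 < h) (hg : 0 ≤ g)
    (hc : 2 / 3 * h ^ 4 ≤ k * c) (hE : k * E ≤ h ^ 4 * g + h ^ 2 * g ^ 2) :
    (1 / c * E) ^ (1 / 2 : ℝ) ≤ 2 * (g ^ (1 / 2 : ℝ) + g / h) := by
  have hkc : 0 < k * c := lt_of_lt_of_le (by positivity) hc
  have hmean : 1 / c * E ≤ 3 / 2 * (g + (g / h) ^ 2) := by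
    rw [show 1 / c * E = k * E / (k * c) by field_simp, div_le_iff₀ hkc]
    calc k * E ≤ h ^ 4 * g + h ^ 2 * g ^ 2 := hE
      _ = 3 / 2 * (g + (g / h) ^ 2) * (2 / 3 * h ^ 4) := by field_simp
      _ ≤ 3 / 2 * (g + (g / h) ^ 2) * (k * c) := by gcongr
  rw [← Real.sqrt_eq_rpow, ← Real.sqrt_eq_rpow, Real.sqrt_le_left (by positivity)]
  nlinarith [Real.sq_sqrt hg, mul_nonneg (Real.sqrt_nonneg g) (div_nonneg hg hh.le)]

/-- Lemma 3.1: cone restriction estimate. If `n ≡ 0 (mod 4)` and `q ≡ 3 (mod 4)`,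
then for any `G ⊆ 𝔽_q^n`, `‖Ĝ‖_{L²(C_n, dσ)} ≤ C (|G|^{1/2} + |G| q^{-n/4})`. -/
theorem cone_restriction (n : ℕ) (hn : 0 < n) (hn4 : n % 4 = 0) :
    ∃ C : ℝ, 0 < C ∧
      ∀ (F : Type) [Field F] [Fintype F] [DecidableEq F],
        Odd (Fintype.card F) →
        Fintype.card F % 4 = 3 →
        ∀ χ : AddChar F ℂ, χ ≠ 1 →
        ∀ G : Finset (Fin n → F),
          ((1 / ((cone n hn F).card : ℝ)) *
              ∑ x ∈ cone n hn F,
                ‖∑ m ∈ G, χ (-(∑ i, x i * m i))‖ ^ (2 : ℕ)) ^ ((1 : ℝ) / 2) ≤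
            C * ((G.card : ℝ) ^ ((1 : ℝ) / 2) +
              (G.card : ℝ) / (Fintype.card F : ℝ) ^ ((n : ℝ) / 4)) := by
  refine ⟨2, two_pos, fun F _ _ _ _ hq χ hχ G => ?_⟩
  have hq3 : (3 : ℝ) ≤ Fintype.card F := by exact_mod_cast (show 3 ≤ Fintype.card F by omega)
  have hq0 : (0 : ℝ) < Fintype.card F := by linarith
  have hroot4 : ((Fintype.card F : ℝ) ^ ((n : ℝ) / 4)) ^ 4 = (Fintype.card F : ℝ) ^ n := by
    rw [← Real.rpow_natCast, ← Real.rpow_mul hq0.le, ← Real.rpow_natCast]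
    norm_num
  have hroot2 : ((Fintype.card F : ℝ) ^ ((n : ℝ) / 4)) ^ 2 = (Fintype.card F : ℝ) ^ (n / 2) := by
    rw [← Real.rpow_natCast, ← Real.rpow_mul hq0.le, ← Real.rpow_natCast,
      Nat.cast_div (by omega) two_ne_zero]
    ring_nf
  apply rpow_half_le_of_mul_le hq0 (by positivity) (Nat.cast_nonneg _)
  · rw [hroot4, card_mul_card_cone hn hn4 hq hχ]
    exact two_thirds_mul_pow_le hq3 (by omega)
  · rw [hroot4, hroot2]
    exact card_mul_sum_cone_norm_sq_le hn hn4 hq hχ G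
end
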